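/- If f and g are orientation preserving circle homeomorphisms, each with a fixed point, and Δ_f = Δ_g, then there exists an orientation preserving homeomorphism k of the circle fixing every point of fix(f) = fix(g) such that k ∘ f ∘ k⁻¹ = g. -/

import Mathlib

noncomputable section

open scoped Classical

local instance : Fact ((0:ℝ) < 1) := ⟨zero_lt_one⟩

/-- The circle `S¹`, realised as `ℝ / ℤ`. -/
abbrev S1 := AddCircle (1 : ℝ)

/-- `F` is a (monotone, degree one) lift of the circle homeomorphism `f`. -/
def IsLiftOf (f : S1 ≃ₜ S1) (F : CircleDeg1Lift) : Prop :=
  ∀ x : ℝ, f (x : S1) = ((F x : ℝ) : S1)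

/-- A circle homeomorphism is orientation preserving iff it admits a monotone degree one lift. -/
def OrientationPreserving (f : S1 ≃ₜ S1) : Prop :=
  ∃ F : CircleDeg1Lift, IsLiftOf f F

/-- A circle homeomorphism is orientation reversing iff it admits a strictly decreasing
degree `-1` lift. -/
def OrientationReversing (f : S1 ≃ₜ S1) : Prop :=
  ∃ F : ℝ → ℝ, StrictAnti F ∧ (∀ x : ℝ, F (x + 1) = F x - 1) ∧
    ∀ x : ℝ, f (x : S1) = ((F x : ℝ) : S1)

/-- `f` has (Poincaré) rotation number `r` (mod 1): some lift has translation number `r`. -/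
def HasRotationNumber (f : S1 ≃ₜ S1) (r : ℝ) : Prop :=
  ∃ F : CircleDeg1Lift, IsLiftOf f F ∧ F.translationNumber = r

/-- An involution. -/
def IsInvolution (f : S1 ≃ₜ S1) : Prop := ∀ x, f (f x) = x

/-- The canonical representative of a point of the circle in `[0, 1)`. -/
def rep (x : S1) : ℝ := (AddCircle.equivIco 1 0 x : ℝ)

/-- The signature of a circle homeomorphism with respect to a lift `F`; when `F` is the
(unique) lift with a fixed point of an orientation preserving homeomorphism with a fixed
point, this is the signature function `Δ_f : S¹ → {-1, 0, 1}`. -/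
def signature (F : CircleDeg1Lift) (x : S1) : ℝ := Real.sign (F (rep x) - rep x)

/-- Strong reversibility in `Homeo⁺(S¹)`. -/
def StronglyReversiblePlus (f : S1 ≃ₜ S1) : Prop :=
  ∃ σ : S1 ≃ₜ S1, OrientationPreserving σ ∧ IsInvolution σ ∧ ∀ x, σ (f (σ x)) = f.symm x

/-- Strong reversibility in the full group `Homeo(S¹)`. -/
def StronglyReversible (f : S1 ≃ₜ S1) : Prop :=
  ∃ τ : S1 ≃ₜ S1, IsInvolution τ ∧ ∀ x, τ (f (τ x)) = f.symm x

namespace Stmt10Aux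
open Set Filter Topology

lemma zpow_apply_add (E : ℝ ≃o ℝ) (m n : ℤ) (x : ℝ) : (E^(m+n)) x = (E^m) ((E^n) x) := by
  rw [zpow_add]; rfl

lemma zpow_succ_apply (E : ℝ ≃o ℝ) (n : ℤ) (x : ℝ) : (E^(n+1)) x = E ((E^n) x) := by
  rw [add_comm, zpow_apply_add, zpow_one]

lemma zpow_neg_cancel (E : ℝ ≃o ℝ) (n : ℤ) (x : ℝ) : (E^(-n)) ((E^n) x) = x := by
  rw [← zpow_apply_add]; simp

lemma symm_fix (E : ℝ ≃o ℝ) {a : ℝ} (h : E a = a) : E.symm a = a := by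
  conv_lhs => rw [← h]
  exact E.symm_apply_apply a

lemma apply_mem_Ioo (E : ℝ ≃o ℝ) {a b : ℝ} (hEa : E a = a) (hEb : E b = b)
    {x : ℝ} (hx : x ∈ Ioo a b) : E x ∈ Ioo a b :=
  ⟨hEa ▸ E.strictMono hx.1, hEb ▸ E.strictMono hx.2⟩

lemma zpow_mem_Ioo (E : ℝ ≃o ℝ) {a b : ℝ} (hEa : E a = a) (hEb : E b = b)
    (n : ℤ) {x : ℝ} (hx : x ∈ Ioo a b) : (E^n) x ∈ Ioo a b := by
  induction n using Int.induction_on with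
  | zero => simpa using hx
  | succ k ih =>
      rw [zpow_succ_apply]
      exact apply_mem_Ioo E hEa hEb ih
  | pred k ih =>
      have h1 : (E^(-(k:ℤ)-1)) x = E.symm ((E^(-(k:ℤ))) x) := by
        have : (-(k:ℤ)-1) = -1 + (-(k:ℤ)) := by ring
        rw [this, zpow_apply_add, zpow_neg_one]; rfl
      rw [h1]
      exact apply_mem_Ioo E.symm (symm_fix E hEa) (symm_fix E hEb) ih


section Orbit
variable (E : ℝ ≃o ℝ) {a b c : ℝ}

lemma orbit_strictMono (hEa : E a = a) (hEb : E b = b)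
    (hinc : ∀ x ∈ Ioo a b, x < E x) (hc : c ∈ Ioo a b) :
    StrictMono (fun n : ℤ => (E^n) c) := by
  apply strictMono_int_of_lt_succ
  intro n
  have h1 : (E^n) c ∈ Ioo a b := zpow_mem_Ioo E hEa hEb n hc
  have := hinc _ h1
  rw [zpow_succ_apply]
  exact this

lemma orbit_tendsto_top (hab : a < b) (hEa : E a = a) (hEb : E b = b)
    (hinc : ∀ x ∈ Ioo a b, x < E x) (hc : c ∈ Ioo a b) :
    Tendsto (fun n : ℕ => (E^(n:ℤ)) c) atTop (𝓝 b) := by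
  set o : ℕ → ℝ := fun n => (E^(n:ℤ)) c with ho
  have hmem : ∀ n, o n ∈ Ioo a b := fun n => zpow_mem_Ioo E hEa hEb _ hc
  have hmono : Monotone o := fun m n hmn =>
    ((orbit_strictMono E hEa hEb hinc hc).monotone (by exact_mod_cast hmn))
  have hbdd : BddAbove (Set.range o) := ⟨b, by rintro _ ⟨n, rfl⟩; exact (hmem n).2.le⟩
  have hlim := tendsto_atTop_ciSup hmono hbdd
  set L := ⨆ n, o n with hL
  have hcL : c ≤ L := by
    calc c = o 0 := by simp [ho]
      _ ≤ L := le_ciSup hbdd 0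
  have hLb : L ≤ b := ciSup_le fun n => (hmem n).2.le
  have hEL : E L = L := by
    have h1 : Tendsto (fun n => o (n+1)) atTop (𝓝 L) := hlim.comp (tendsto_add_atTop_nat 1)
    have h2 : Tendsto (fun n => E (o n)) atTop (𝓝 (E L)) :=
      (E.toHomeomorph.continuous.tendsto L).comp hlim
    have h3 : (fun n => o (n+1)) = fun n => E (o n) := by
      funext n; simp only [ho]; push_cast; rw [zpow_succ_apply]
    rw [h3] at h1
    exact tendsto_nhds_unique h2 h1
  have : L = b := by
    rcases lt_or_eq_of_le hLb with h | h
    · exact absurd (hinc L ⟨lt_of_lt_of_le hc.1 hcL, h⟩) (by rw [hEL]; exact lt_irrefl _)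
    · exact h
  rwa [this] at hlim

lemma orbit_tendsto_bot (hab : a < b) (hEa : E a = a) (hEb : E b = b)
    (hinc : ∀ x ∈ Ioo a b, x < E x) (hc : c ∈ Ioo a b) :
    Tendsto (fun n : ℕ => (E^(-(n:ℤ))) c) atTop (𝓝 a) := by
  set o : ℕ → ℝ := fun n => (E^(-(n:ℤ))) c with ho
  have hmem : ∀ n, o n ∈ Ioo a b := fun n => zpow_mem_Ioo E hEa hEb _ hc
  have hanti : Antitone o := by
    intro m n hmn
    exact ((orbit_strictMono E hEa hEb hinc hc).monotone (by
      simp only [neg_le_neg_iff]; exact_mod_cast hmn))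
  have hbdd : BddBelow (Set.range o) := ⟨a, by rintro _ ⟨n, rfl⟩; exact (hmem n).1.le⟩
  have hlim := tendsto_atTop_ciInf hanti hbdd
  set M := ⨅ n, o n with hM
  have hcM : M ≤ c := by
    have h0 := ciInf_le hbdd 0
    have : o 0 = c := by simp [ho]
    rwa [this] at h0
  have hMa : a ≤ M := le_ciInf fun n => (hmem n).1.le
  have hEM : E.symm M = M := by
    have h1 : Tendsto (fun n => o (n+1)) atTop (𝓝 M) := hlim.comp (tendsto_add_atTop_nat 1)
    have h2 : Tendsto (fun n => E.symm (o n)) atTop (𝓝 (E.symm M)) :=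
      (E.symm.toHomeomorph.continuous.tendsto M).comp hlim
    have h3 : (fun n => o (n+1)) = fun n => E.symm (o n) := by
      funext n; simp only [ho]
      have : (-((n:ℤ)+1)) = -1 + (-(n:ℤ)) := by ring
      push_cast
      rw [this, zpow_apply_add, zpow_neg_one]; rfl
    rw [h3] at h1
    exact tendsto_nhds_unique h2 h1
  have hEM' : E M = M := by
    conv_lhs => rw [← hEM]
    exact E.apply_symm_apply M
  have : M = a := by
    rcases lt_or_eq_of_le hMa with h | h
    · exact absurd (hinc M ⟨h, lt_of_le_of_lt hcM hc.2⟩) (by rw [hEM']; exact lt_irrefl _)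
    · exact h.symm
  rwa [this] at hlim

lemma exists_greatest_le (hab : a < b) (hEa : E a = a) (hEb : E b = b)
    (hinc : ∀ x ∈ Ioo a b, x < E x) (hc : c ∈ Ioo a b) {x : ℝ} (hx : x ∈ Ioo a b) :
    ∃ n : ℤ, (E^n) c ≤ x ∧ x < (E^(n+1)) c ∧ ∀ m : ℤ, (E^m) c ≤ x → m ≤ n := by
  have hsm := orbit_strictMono E hEa hEb hinc hc
  have hbot := orbit_tendsto_bot E hab hEa hEb hinc hc
  have htop := orbit_tendsto_top E hab hEa hEb hinc hc
  have hne : ∃ n : ℤ, (E^n) c ≤ x := by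
    have hev : ∀ᶠ n : ℕ in atTop, (E^(-(n:ℤ))) c < x :=
      hbot.eventually (eventually_lt_nhds hx.1)
    obtain ⟨n, hn⟩ := hev.exists
    exact ⟨-(n:ℤ), hn.le⟩
  have hbd : ∃ B : ℤ, ∀ m : ℤ, (E^m) c ≤ x → m ≤ B := by
    have hev : ∀ᶠ n : ℕ in atTop, x < (E^(n:ℤ)) c :=
      htop.eventually (eventually_gt_nhds hx.2)
    obtain ⟨n, hn⟩ := hev.exists
    refine ⟨(n:ℤ), fun m hm => ?_⟩
    by_contra hc2
    push_neg at hc2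
    exact absurd (le_trans (hsm.monotone hc2.le) hm) (not_le.mpr hn)
  obtain ⟨n, hn, hmax⟩ := Int.exists_greatest_of_bdd hbd hne
  refine ⟨n, hn, ?_, hmax⟩
  by_contra hc2
  push_neg at hc2
  exact absurd (hmax _ hc2) (by omega)

end Orbit

lemma conj_inc (E E' : ℝ ≃o ℝ) {a b : ℝ} (hab : a < b)
    (hEa : E a = a) (hEb : E b = b) (hE'a : E' a = a) (hE'b : E' b = b)
    (hinc : ∀ x ∈ Ioo a b, x < E x) (hinc' : ∀ x ∈ Ioo a b, x < E' x) :
    ∃ K : ℝ → ℝ, StrictMonoOn K (Ioo a b) ∧ MapsTo K (Ioo a b) (Ioo a b)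
      ∧ SurjOn K (Ioo a b) (Ioo a b) ∧ ∀ x ∈ Ioo a b, K (E x) = E' (K x) := by
  classical
  set c : ℝ := (a+b)/2 with hcdef
  have hc : c ∈ Ioo a b := ⟨by simp only [hcdef]; linarith, by simp only [hcdef]; linarith⟩
  have hsm := orbit_strictMono E hEa hEb hinc hc
  have hsm' := orbit_strictMono E' hE'a hE'b hinc' hc
  have hd : 0 < E c - c := sub_pos.mpr (hinc c hc)
  have hd' : 0 < E' c - c := sub_pos.mpr (hinc' c hc)
  set φ : ℝ → ℝ := fun t => c + (t - c) * ((E' c - c)/(E c - c)) with hφdef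
  set ψ : ℝ → ℝ := fun w => c + (w - c) * ((E c - c)/(E' c - c)) with hψdef
  have hφmono : StrictMono φ := by
    intro u v huv
    have : 0 < (E' c - c)/(E c - c) := div_pos hd' hd
    simp only [hφdef]
    nlinarith
  have hφc : φ c = c := by simp [hφdef]
  have hφEc : φ (E c) = E' c := by
    simp only [hφdef]; field_simp; ring
  have hφψ : ∀ w, φ (ψ w) = w := by
    intro w; simp only [hφdef, hψdef]; field_simp; ring
  have hψmono : StrictMono ψ := by
    intro u v huv
    have : 0 < (E c - c)/(E' c - c) := div_pos hd hd'
    simp only [hψdef]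
    nlinarith
  have hψc : ψ c = c := by simp [hψdef]
  have hψE'c : ψ (E' c) = E c := by
    simp only [hψdef]; field_simp; ring
  have hφIco : ∀ t ∈ Ico c (E c), φ t ∈ Ico c (E' c) := by
    intro t ht
    refine ⟨by rw [← hφc]; exact hφmono.monotone ht.1, by rw [← hφEc]; exact hφmono ht.2⟩
  have hψIco : ∀ w ∈ Ico c (E' c), ψ w ∈ Ico c (E c) := by
    intro w hw
    refine ⟨by rw [← hψc]; exact hψmono.monotone hw.1, by rw [← hψE'c]; exact hψmono hw.2⟩
  have hIcoIoo : Ico c (E c) ⊆ Ioo a b := fun y hy =>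
    ⟨lt_of_lt_of_le hc.1 hy.1, lt_trans hy.2 (apply_mem_Ioo E hEa hEb hc).2⟩
  have hIcoIoo' : Ico c (E' c) ⊆ Ioo a b := fun y hy =>
    ⟨lt_of_lt_of_le hc.1 hy.1, lt_trans hy.2 (apply_mem_Ioo E' hE'a hE'b hc).2⟩
  set N : ℝ → ℤ := fun x =>
    if h : x ∈ Ioo a b then (exists_greatest_le E hab hEa hEb hinc hc h).choose else 0
    with hNdef
  have hN : ∀ x (h : x ∈ Ioo a b), (E^(N x)) c ≤ x ∧ x < (E^(N x + 1)) c ∧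
      ∀ m : ℤ, (E^m) c ≤ x → m ≤ N x := by
    intro x h
    simp only [hNdef, dif_pos h]
    exact (exists_greatest_le E hab hEa hEb hinc hc h).choose_spec
  have hNuniq : ∀ x (h : x ∈ Ioo a b) (m : ℤ),
      (E^m) c ≤ x → x < (E^(m+1)) c → m = N x := by
    intro x h m h1 h2
    have hmax := (hN x h).2.2 m h1
    rcases lt_or_eq_of_le hmax with hlt | he
    · exfalso
      have : (m+1 : ℤ) ≤ N x := by omega
      have := hsm.monotone this
      exact absurd (le_trans this (hN x h).1) (not_le.mpr h2)
    · exact he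
  set K : ℝ → ℝ := fun x => (E'^(N x)) (φ ((E^(-(N x))) x)) with hKdef
  have ht : ∀ x (h : x ∈ Ioo a b), (E^(-(N x))) x ∈ Ico c (E c) := by
    intro x h
    constructor
    · have := (E^(-(N x))).monotone (hN x h).1
      rwa [zpow_neg_cancel] at this
    · have h2 := (E^(-(N x))).strictMono (hN x h).2.1
      have h3 : (E^(-(N x))) ((E^(N x + 1)) c) = E c := by
        rw [← zpow_apply_add]
        norm_num
      rwa [h3] at h2
  have hKIco : ∀ x (h : x ∈ Ioo a b),
      K x ∈ Ico ((E'^(N x)) c) ((E'^(N x + 1)) c) := by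
    intro x h
    have hφt := hφIco _ (ht x h)
    constructor
    · exact (E'^(N x)).monotone hφt.1
    · have := (E'^(N x)).strictMono hφt.2
      rwa [show (E'^(N x)) (E' c) = (E'^(N x + 1)) c by
        rw [zpow_apply_add, zpow_one]] at this
  have hKmem : MapsTo K (Ioo a b) (Ioo a b) := by
    intro x h
    exact zpow_mem_Ioo E' hE'a hE'b (N x) (hIcoIoo' (hφIco _ (ht x h)))
  have hNof : ∀ (m : ℤ) (t : ℝ), t ∈ Ico c (E c) →
      (E^m) t ∈ Ioo a b ∧ N ((E^m) t) = m := by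
    intro m t htm
    have hmem : (E^m) t ∈ Ioo a b := zpow_mem_Ioo E hEa hEb m (hIcoIoo htm)
    refine ⟨hmem, ?_⟩
    refine (hNuniq _ hmem m ((E^m).monotone htm.1) ?_).symm
    have := (E^m).strictMono htm.2
    rwa [show (E^m) (E c) = (E^(m+1)) c by rw [zpow_apply_add, zpow_one]] at this
  refine ⟨K, ?_, hKmem, ?_, ?_⟩
  · -- strict mono
    intro x hx y hy hxy
    have hNle : N x ≤ N y := (hN y hy).2.2 _ (le_trans (hN x hx).1 hxy.le)
    rcases lt_or_eq_of_le hNle with hlt | he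
    · calc K x < (E'^(N x + 1)) c := (hKIco x hx).2
        _ ≤ (E'^(N y)) c := hsm'.monotone (by omega)
        _ ≤ K y := (hKIco y hy).1
    · simp only [hKdef, ← he]
      exact (E'^(N x)).strictMono (hφmono ((E^(-(N x))).strictMono hxy))
  · -- surjectivity
    intro w hw
    obtain ⟨M, hM1, hM2, _⟩ := exists_greatest_le E' hab hE'a hE'b hinc' hc hw
    have hu : (E'^(-M)) w ∈ Ico c (E' c) := by
      constructor
      · have := (E'^(-M)).monotone hM1
        rwa [zpow_neg_cancel] at this
      · have h2 := (E'^(-M)).strictMono hM2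
        have h3 : (E'^(-M)) ((E'^(M + 1)) c) = E' c := by
          rw [← zpow_apply_add]; norm_num
        rwa [h3] at h2
    set t := ψ ((E'^(-M)) w) with htdef
    have htIco : t ∈ Ico c (E c) := hψIco _ hu
    obtain ⟨hxmem, hNx⟩ := hNof M t htIco
    refine ⟨(E^M) t, hxmem, ?_⟩
    simp only [hKdef, hNx]
    rw [zpow_neg_cancel, htdef, hφψ, ← zpow_apply_add]
    norm_num
  · -- conjugation
    intro x hx
    have hEx : E x ∈ Ioo a b := apply_mem_Ioo E hEa hEb hx
    have hNEx : N (E x) = N x + 1 := by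
      refine (hNuniq _ hEx (N x + 1) ?_ ?_).symm
      · rw [zpow_succ_apply]
        exact E.monotone (hN x hx).1
      · rw [show (N x + 1 + 1 : ℤ) = (N x + 1) + 1 from rfl, zpow_succ_apply]
        exact E.strictMono (hN x hx).2.1
    simp only [hKdef, hNEx]
    have harg : (E^(-(N x + 1))) (E x) = (E^(-(N x))) x := by
      have : E x = (E^(1:ℤ)) x := by rw [zpow_one]
      rw [this, ← zpow_apply_add]
      norm_num
    rw [harg, zpow_succ_apply]

lemma conj_dec (E E' : ℝ ≃o ℝ) {a b : ℝ} (hab : a < b)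
    (hEa : E a = a) (hEb : E b = b) (hE'a : E' a = a) (hE'b : E' b = b)
    (hdec : ∀ x ∈ Ioo a b, E x < x) (hdec' : ∀ x ∈ Ioo a b, E' x < x) :
    ∃ K : ℝ → ℝ, StrictMonoOn K (Ioo a b) ∧ MapsTo K (Ioo a b) (Ioo a b)
      ∧ SurjOn K (Ioo a b) (Ioo a b) ∧ ∀ x ∈ Ioo a b, K (E x) = E' (K x) := by
  have hinc : ∀ x ∈ Ioo a b, x < E.symm x := by
    intro x hx
    have h1 : E.symm x ∈ Ioo a b :=
      apply_mem_Ioo E.symm (symm_fix E hEa) (symm_fix E hEb) hx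
    have := hdec _ h1
    rwa [E.apply_symm_apply] at this
  have hinc' : ∀ x ∈ Ioo a b, x < E'.symm x := by
    intro x hx
    have h1 : E'.symm x ∈ Ioo a b :=
      apply_mem_Ioo E'.symm (symm_fix E' hE'a) (symm_fix E' hE'b) hx
    have := hdec' _ h1
    rwa [E'.apply_symm_apply] at this
  obtain ⟨K, h1, h2, h3, h4⟩ := conj_inc E.symm E'.symm hab (symm_fix E hEa)
    (symm_fix E hEb) (symm_fix E' hE'a) (symm_fix E' hE'b) hinc hinc'
  refine ⟨K, h1, h2, h3, fun x hx => ?_⟩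
  have hEx : E x ∈ Ioo a b := apply_mem_Ioo E hEa hEb hx
  have := h4 (E x) hEx
  rw [E.symm_apply_apply] at this
  rw [this, E'.apply_symm_apply]

lemma sign_pos_of (E E' : ℝ ≃o ℝ)
    (hsgn : ∀ x, Real.sign (E x - x) = Real.sign (E' x - x))
    {x : ℝ} (h : x < E x) : x < E' x := by
  have h1 : Real.sign (E x - x) = 1 := Real.sign_of_pos (by linarith)
  rcases lt_trichotomy x (E' x) with h2 | h2 | h2
  · exact h2
  · exfalso; rw [hsgn x] at h1; rw [← h2] at h1; simp at h1
  · exfalso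
    have := Real.sign_of_neg (show E' x - x < 0 by linarith)
    rw [hsgn x, this] at h1; norm_num at h1
  
lemma sign_neg_of (E E' : ℝ ≃o ℝ)
    (hsgn : ∀ x, Real.sign (E x - x) = Real.sign (E' x - x))
    {x : ℝ} (h : E x < x) : E' x < x := by
  have h1 : Real.sign (E x - x) = -1 := Real.sign_of_neg (by linarith)
  rcases lt_trichotomy (E' x) x with h2 | h2 | h2
  · exact h2
  · exfalso; rw [hsgn x] at h1; rw [h2] at h1; simp at h1
  · exfalso
    have := Real.sign_of_pos (show 0 < E' x - x by linarith)
    rw [hsgn x, this] at h1; norm_num at h1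

lemma sign_fix_of (E E' : ℝ ≃o ℝ)
    (hsgn : ∀ x, Real.sign (E x - x) = Real.sign (E' x - x))
    {x : ℝ} (h : E x = x) : E' x = x := by
  rcases lt_trichotomy (E' x) x with h2 | h2 | h2
  · exact absurd (sign_neg_of E' E (fun x => (hsgn x).symm) h2) (by rw [h]; exact lt_irrefl x)
  · exact h2
  · exact absurd (sign_pos_of E' E (fun x => (hsgn x).symm) h2) (by rw [h]; exact lt_irrefl x)

lemma comp_exists (E E' : ℝ ≃o ℝ)
    (hsgn : ∀ x, Real.sign (E x - x) = Real.sign (E' x - x))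
    {a b : ℝ} (hab : a < b) (hEa : E a = a) (hEb : E b = b)
    (hnf : ∀ y ∈ Ioo a b, E y ≠ y) :
    ∃ K : ℝ → ℝ, StrictMonoOn K (Ioo a b) ∧ MapsTo K (Ioo a b) (Ioo a b)
      ∧ SurjOn K (Ioo a b) (Ioo a b) ∧ ∀ x ∈ Ioo a b, K (E x) = E' (K x) := by
  have hE'a : E' a = a := sign_fix_of E E' hsgn hEa
  have hE'b : E' b = b := sign_fix_of E E' hsgn hEb
  have hcont : Continuous (fun x => E x - x) :=
    E.toHomeomorph.continuous.sub continuous_id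
  by_cases hdir : ∀ x ∈ Ioo a b, x < E x
  · exact conj_inc E E' hab hEa hEb hE'a hE'b hdir
      (fun x hx => sign_pos_of E E' hsgn (hdir x hx))
  · push_neg at hdir
    obtain ⟨v, hv, hvle⟩ := hdir
    have hvlt : E v < v := lt_of_le_of_ne hvle (hnf v hv)
    have hdec : ∀ x ∈ Ioo a b, E x < x := by
      intro x hx
      rcases lt_trichotomy (E x) x with h | h | h
      · exact h
      · exact absurd h (hnf x hx)
      · exfalso
        have hsub : uIcc x v ⊆ Ioo a b := by
          intro z hz
          rw [mem_uIcc] at hz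
          rcases hz with ⟨h1, h2⟩ | ⟨h1, h2⟩
          · exact ⟨lt_of_lt_of_le hx.1 h1, lt_of_le_of_lt h2 hv.2⟩
          · exact ⟨lt_of_lt_of_le hv.1 h1, lt_of_le_of_lt h2 hx.2⟩
        have h0 : (0:ℝ) ∈ uIcc ((fun y => E y - y) x) ((fun y => E y - y) v) := by
          rw [mem_uIcc]
          right
          exact ⟨by simp only [sub_nonpos]; exact hvlt.le, by simp only [sub_nonneg]; exact h.le⟩
        have := intermediate_value_uIcc (hcont.continuousOn (s := uIcc x v)) h0
        obtain ⟨z, hz, hz0⟩ := this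
        refine hnf z (hsub hz) ?_
        have : E z - z = 0 := hz0
        linarith
    exact conj_dec E E' hab hEa hEb hE'a hE'b hdec
      (fun x hx => sign_neg_of E E' hsgn (hdec x hx))

lemma per_int (E : ℝ ≃o ℝ) (hp : ∀ x, E (x+1) = E x + 1) (x : ℝ) (n : ℤ) :
    E (x + n) = E x + n := by
  have hsub : ∀ y : ℝ, E (y - 1) = E y - 1 := by
    intro y
    have := hp (y - 1)
    rw [sub_add_cancel] at this
    linarith
  induction n using Int.induction_on with
  | zero => simp
  | succ k ih =>
      push_cast at ih ⊢
      rw [show x + ((k:ℝ) + 1) = (x + (k:ℝ)) + 1 by ring, hp, ih]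
      ring
  | pred k ih =>
      push_cast at ih ⊢
      rw [show x + (-(k:ℝ) - 1) = (x + -(k:ℝ)) - 1 by ring, hsub, ih]
      ring

theorem key (E E' : ℝ ≃o ℝ)
    (hEper : ∀ x, E (x+1) = E x + 1) (hE'per : ∀ x, E' (x+1) = E' x + 1)
    (hfix : ∃ x, E x = x)
    (hsgn : ∀ x, Real.sign (E x - x) = Real.sign (E' x - x)) :
    ∃ K : ℝ ≃o ℝ, (∀ x, K (x+1) = K x + 1) ∧ (∀ x, E x = x → K x = x) ∧
      ∀ x, K (E x) = E' (K x) := by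
  classical
  obtain ⟨x₀, hx₀⟩ := hfix
  set Z : Set ℝ := {x | E x = x} with hZdef
  have hZx₀ : x₀ ∈ Z := hx₀
  have hZclosed : IsClosed Z := isClosed_eq E.toHomeomorph.continuous continuous_id
  have hZint : ∀ x ∈ Z, ∀ n : ℤ, x + n ∈ Z := by
    intro x hx n
    show E (x + n) = x + n
    rw [per_int E hEper, hx]
  -- component endpoints
  set A : ℝ → ℝ := fun y => sSup (Z ∩ Iic y) with hAdef
  set B : ℝ → ℝ := fun y => sInf (Z ∩ Ici y) with hBdef
  set I : Set ℝ := Ico x₀ (x₀ + 1) with hIdef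
  have hx₀1 : (x₀ + 1) ∈ Z := by simpa using hZint x₀ hZx₀ 1
  have hbddA : ∀ y : ℝ, BddAbove (Z ∩ Iic y) := fun y => ⟨y, fun w hw => hw.2⟩
  have hbddB : ∀ y : ℝ, BddBelow (Z ∩ Ici y) := fun y => ⟨y, fun w hw => hw.2⟩
  have hAmem : ∀ y ∈ I, A y ∈ Z ∩ Iic y := by
    intro y hy
    exact IsClosed.csSup_mem (hZclosed.inter isClosed_Iic) ⟨x₀, hZx₀, hy.1⟩ (hbddA y)
  have hBmem : ∀ y ∈ I, B y ∈ Z ∩ Ici y := by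
    intro y hy
    exact IsClosed.csInf_mem (hZclosed.inter isClosed_Ici)
      ⟨x₀ + 1, hx₀1, le_of_lt hy.2⟩ (hbddB y)
  have hx₀A : ∀ y ∈ I, x₀ ≤ A y := fun y hy =>
    le_csSup (hbddA y) ⟨hZx₀, hy.1⟩
  have hBx₀ : ∀ y ∈ I, B y ≤ x₀ + 1 := fun y hy =>
    csInf_le (hbddB y) ⟨hx₀1, hy.2.le⟩
  have hyA : ∀ y ∈ I, y ∉ Z → A y < y := by
    intro y hy hyz
    exact lt_of_le_of_ne (hAmem y hy).2 (fun h => hyz (h ▸ (hAmem y hy).1))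
  have hyB : ∀ y ∈ I, y ∉ Z → y < B y := by
    intro y hy hyz
    exact lt_of_le_of_ne (hBmem y hy).2 (fun h => hyz (h ▸ (hBmem y hy).1))
  have hnofix : ∀ y ∈ I, ∀ z ∈ Ioo (A y) (B y), z ∉ Z := by
    intro y hy z hz hzZ
    rcases le_or_gt z y with h | h
    · exact absurd (le_csSup (hbddA y) ⟨hzZ, h⟩) (not_le.mpr hz.1)
    · exact absurd (csInf_le (hbddB y) ⟨hzZ, h.le⟩) (not_le.mpr hz.2)
  have hconst : ∀ y ∈ I, y ∉ Z → ∀ z ∈ Ioo (A y) (B y), A z = A y ∧ B z = B y := by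
    intro y hy hyz z hz
    have hseteqA : Z ∩ Iic z = Z ∩ Iic (A y) := by
      ext w
      constructor
      · rintro ⟨hw1, hw2⟩
        refine ⟨hw1, ?_⟩
        simp only [mem_Iic] at hw2 ⊢
        by_contra hcon
        push_neg at hcon
        exact hnofix y hy w ⟨hcon, lt_of_le_of_lt hw2 hz.2⟩ hw1
      · rintro ⟨hw1, hw2⟩
        simp only [mem_Iic] at hw2 ⊢
        exact ⟨hw1, le_trans hw2 (le_of_lt hz.1)⟩
    have hseteqB : Z ∩ Ici z = Z ∩ Ici (B y) := by
      ext w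
      constructor
      · rintro ⟨hw1, hw2⟩
        refine ⟨hw1, ?_⟩
        simp only [mem_Ici] at hw2 ⊢
        by_contra hcon
        push_neg at hcon
        exact hnofix y hy w ⟨lt_of_lt_of_le hz.1 hw2, hcon⟩ hw1
      · rintro ⟨hw1, hw2⟩
        simp only [mem_Ici] at hw2 ⊢
        exact ⟨hw1, le_trans (le_of_lt hz.2) hw2⟩
    constructor
    · rw [hAdef]
      simp only
      rw [hseteqA]
      have hAyZ : A y ∈ Z := (hAmem y hy).1
      apply le_antisymm
      · exact csSup_le ⟨A y, hAyZ, mem_Iic.mpr le_rfl⟩ (fun w hw => hw.2)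
      · exact le_csSup (hbddA (A y)) ⟨hAyZ, mem_Iic.mpr le_rfl⟩
    · rw [hBdef]
      simp only
      rw [hseteqB]
      have hByZ : B y ∈ Z := (hBmem y hy).1
      apply le_antisymm
      · exact csInf_le (hbddB (B y)) ⟨hByZ, mem_Ici.mpr le_rfl⟩
      · exact le_csInf ⟨B y, hByZ, mem_Ici.mpr le_rfl⟩ (fun w hw => hw.2)
  -- choose conjugating maps on components
  set good : ℝ → ℝ → Prop := fun a b =>
    a < b ∧ E a = a ∧ E b = b ∧ ∀ y ∈ Ioo a b, E y ≠ y with hgooddef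
  set Kc : ℝ → ℝ → (ℝ → ℝ) := fun a b =>
    if h : good a b then (comp_exists E E' hsgn h.1 h.2.1 h.2.2.1 h.2.2.2).choose
    else id with hKcdef
  have hKc : ∀ a b, good a b → StrictMonoOn (Kc a b) (Ioo a b) ∧
      MapsTo (Kc a b) (Ioo a b) (Ioo a b) ∧ SurjOn (Kc a b) (Ioo a b) (Ioo a b) ∧
      ∀ x ∈ Ioo a b, Kc a b (E x) = E' (Kc a b x) := by
    intro a b h
    simp only [hKcdef, dif_pos h]
    exact (comp_exists E E' hsgn h.1 h.2.1 h.2.2.1 h.2.2.2).choose_spec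
  have hgoodAB : ∀ y ∈ I, y ∉ Z → good (A y) (B y) := by
    intro y hy hyz
    exact ⟨lt_trans (hyA y hy hyz) (hyB y hy hyz), (hAmem y hy).1, (hBmem y hy).1,
      fun z hz => hnofix y hy z hz⟩
  have hyAB : ∀ y ∈ I, y ∉ Z → y ∈ Ioo (A y) (B y) := fun y hy hyz =>
    ⟨hyA y hy hyz, hyB y hy hyz⟩
  have hABI : ∀ y ∈ I, Ioo (A y) (B y) ⊆ I := by
    intro y hy z hz
    exact ⟨le_trans (hx₀A y hy) hz.1.le, lt_of_lt_of_le hz.2 (hBx₀ y hy)⟩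
  -- K₀ on the fundamental domain
  set K₀ : ℝ → ℝ := fun y => if y ∈ Z then y else Kc (A y) (B y) y with hK₀def
  have hK₀Z : ∀ y ∈ Z, K₀ y = y := fun y hy => by simp [hK₀def, hy]
  have hK₀comp : ∀ y ∈ I, (hyz : y ∉ Z) → K₀ y ∈ Ioo (A y) (B y) := by
    intro y hy hyz
    have := (hKc _ _ (hgoodAB y hy hyz)).2.1 (hyAB y hy hyz)
    simpa [hK₀def, hyz] using this
  have hK₀eq : ∀ y ∈ I, (hyz : y ∉ Z) → ∀ z ∈ Ioo (A y) (B y),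
      K₀ z = Kc (A y) (B y) z := by
    intro y hy hyz z hz
    have hzz : z ∉ Z := hnofix y hy z hz
    obtain ⟨hAz, hBz⟩ := hconst y hy hyz z hz
    simp only [hK₀def, if_neg hzz, hAz, hBz]
  have hK₀I : MapsTo K₀ I I := by
    intro y hy
    by_cases hyz : y ∈ Z
    · rwa [hK₀Z y hyz]
    · exact hABI y hy (hK₀comp y hy hyz)
  have hK₀mono : StrictMonoOn K₀ I := by
    intro y hy y' hy' hlt
    by_cases hyz : y ∈ Z <;> by_cases hyz' : y' ∈ Z
    · rw [hK₀Z y hyz, hK₀Z y' hyz']; exact hlt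
    · rw [hK₀Z y hyz]
      have h1 : y ≤ A y' := le_csSup (hbddA y') ⟨hyz, mem_Iic.mpr hlt.le⟩
      exact lt_of_le_of_lt h1 (hK₀comp y' hy' hyz').1
    · rw [hK₀Z y' hyz']
      have h1 : B y ≤ y' := csInf_le (hbddB y) ⟨hyz', mem_Ici.mpr hlt.le⟩
      exact lt_of_lt_of_le (hK₀comp y hy hyz).2 h1
    · rcases lt_or_ge y' (B y) with h | h
      · -- same component
        have hy'mem : y' ∈ Ioo (A y) (B y) := ⟨lt_trans (hyA y hy hyz) hlt, h⟩
        have e1 : K₀ y = Kc (A y) (B y) y :=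
          hK₀eq y hy hyz y (hyAB y hy hyz)
        have e2 : K₀ y' = Kc (A y) (B y) y' := hK₀eq y hy hyz y' hy'mem
        rw [e1, e2]
        exact (hKc _ _ (hgoodAB y hy hyz)).1 (hyAB y hy hyz) hy'mem hlt
      · have h1 : B y ≤ A y' := le_csSup (hbddA y') ⟨(hBmem y hy).1, mem_Iic.mpr h⟩
        calc K₀ y < B y := (hK₀comp y hy hyz).2
          _ ≤ A y' := h1
          _ < K₀ y' := (hK₀comp y' hy' hyz').1
  have hK₀surj : SurjOn K₀ I I := by
    intro w hw
    by_cases hwz : w ∈ Z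
    · exact ⟨w, hw, hK₀Z w hwz⟩
    · obtain ⟨y, hy, hKy⟩ := (hKc _ _ (hgoodAB w hw hwz)).2.2.1 (hyAB w hw hwz)
      refine ⟨y, hABI w hw hy, ?_⟩
      rw [hK₀eq w hw hwz y hy]
      exact hKy
  have hK₀conj : ∀ y ∈ I, y ∉ Z → K₀ (E y) = E' (K₀ y) := by
    intro y hy hyz
    have hEy : E y ∈ Ioo (A y) (B y) :=
      apply_mem_Ioo E (hAmem y hy).1 (hBmem y hy).1 (hyAB y hy hyz)
    rw [hK₀eq y hy hyz (E y) hEy, hK₀eq y hy hyz y (hyAB y hy hyz)]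
    exact (hKc _ _ (hgoodAB y hy hyz)).2.2.2 y (hyAB y hy hyz)
  -- global map
  set Kf : ℝ → ℝ := fun x => (⌊x - x₀⌋ : ℝ) + K₀ (x - ⌊x - x₀⌋) with hKfdef
  have hfr : ∀ x : ℝ, x - ⌊x - x₀⌋ ∈ I := by
    intro x
    constructor
    · have := Int.floor_le (x - x₀); linarith
    · have := Int.lt_floor_add_one (x - x₀); linarith
  have hKfmono : StrictMono Kf := by
    intro x y hxy
    have hmn : (⌊x - x₀⌋ : ℤ) ≤ ⌊y - x₀⌋ := Int.floor_le_floor (by linarith)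
    rcases lt_or_eq_of_le hmn with h | h
    · have h1 : K₀ (x - ⌊x - x₀⌋) < x₀ + 1 := (hK₀I (hfr x)).2
      have h2 : x₀ ≤ K₀ (y - ⌊y - x₀⌋) := (hK₀I (hfr y)).1
      have h3 : (⌊x - x₀⌋ : ℝ) + 1 ≤ (⌊y - x₀⌋ : ℝ) := by exact_mod_cast h
      simp only [hKfdef]
      linarith
    · have h3 : ((⌊x - x₀⌋ : ℤ) : ℝ) = ((⌊y - x₀⌋ : ℤ) : ℝ) := by exact_mod_cast h
      have harg : x - ((⌊x - x₀⌋ : ℤ) : ℝ) < y - ((⌊y - x₀⌋ : ℤ) : ℝ) := by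
        rw [h3]; linarith
      have h2 := hK₀mono (hfr x) (hfr y) harg
      simp only [hKfdef]
      linarith
  have hKfper : ∀ x, Kf (x + 1) = Kf x + 1 := by
    intro x
    have h1 : (⌊x + 1 - x₀⌋ : ℤ) = ⌊x - x₀⌋ + 1 := by
      rw [show x + 1 - x₀ = (x - x₀) + 1 by ring, Int.floor_add_one]
    have h2 : x + 1 - ((⌊x + 1 - x₀⌋ : ℤ) : ℝ) = x - ((⌊x - x₀⌋ : ℤ) : ℝ) := by
      rw [h1]; push_cast; ring
    simp only [hKfdef, h2, h1]
    push_cast; ring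
  have hKfsurj : Function.Surjective Kf := by
    intro w
    set n : ℤ := ⌊w - x₀⌋ with hn
    have hwI : w - (n:ℝ) ∈ I := hfr w
    obtain ⟨y, hyI, hyw⟩ := hK₀surj hwI
    refine ⟨y + n, ?_⟩
    simp only [hIdef, mem_Ico] at hyI
    have hfl : (⌊y + (n:ℝ) - x₀⌋ : ℤ) = n := by
      rw [Int.floor_eq_iff]
      constructor
      · linarith [hyI.1]
      · push_cast; linarith [hyI.2]
    simp only [hKfdef, hfl]
    rw [show y + (n:ℝ) - (n:ℝ) = y by ring, hyw]
    ring
  have hKfZ : ∀ x, E x = x → Kf x = x := by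
    intro x hx
    have hxZ : x ∈ Z := hx
    have hyZ : x - ((⌊x - x₀⌋:ℤ):ℝ) ∈ Z := by
      have h2 := hZint x hxZ (-⌊x - x₀⌋)
      push_cast at h2
      rwa [show x + -((⌊x - x₀⌋:ℤ):ℝ) = x - ((⌊x - x₀⌋:ℤ):ℝ) by ring] at h2
    simp only [hKfdef]
    rw [hK₀Z _ hyZ]
    ring
  have hKfconj : ∀ x, Kf (E x) = E' (Kf x) := by
    intro x
    by_cases hxZ : x ∈ Z
    · have hEx : E x = x := hxZ
      rw [hEx, hKfZ x hEx]
      exact (sign_fix_of E E' hsgn hEx).symm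
    · set m : ℤ := ⌊x - x₀⌋ with hm
      set y : ℝ := x - (m:ℝ) with hy
      have hyI : y ∈ I := hfr x
      have hyZ : y ∉ Z := fun hc => hxZ (by
        have h2 := hZint y hc m
        rwa [show y + (m:ℝ) = x by rw [hy]; ring] at h2)
      have hEx : E x = E y + m := by
        rw [show x = y + (m:ℝ) by rw [hy]; ring, per_int E hEper]
      have hEyIoo : E y ∈ Ioo (A y) (B y) :=
        apply_mem_Ioo E (hAmem y hyI).1 (hBmem y hyI).1 (hyAB y hyI hyZ)
      have hEyI : E y ∈ I := hABI y hyI hEyIoo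
      have hflE : (⌊E x - x₀⌋ : ℤ) = m := by
        rw [hEx]
        rw [Int.floor_eq_iff]
        simp only [hIdef, mem_Ico] at hEyI
        constructor
        · linarith [hEyI.1]
        · push_cast; linarith [hEyI.2]
      have hargE : E x - ((⌊E x - x₀⌋:ℤ):ℝ) = E y := by rw [hflE, hEx]; ring
      simp only [hKfdef]
      rw [hargE, hflE, hK₀conj y hyI hyZ]
      rw [show ((⌊x - x₀⌋:ℤ):ℝ) + K₀ (x - ((⌊x - x₀⌋:ℤ):ℝ)) = K₀ y + (m:ℝ) by
        rw [← hm, ← hy]; ring]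
      rw [per_int E' hE'per (K₀ y) m]
      ring
  refine ⟨StrictMono.orderIsoOfSurjective Kf hKfmono hKfsurj, ?_, ?_, ?_⟩
  · intro x; exact hKfper x
  · intro x hx; exact hKfZ x hx
  · intro x; exact hKfconj x
end Stmt10Aux

namespace Stmt10Aux

lemma coe_eq_iff (x y : ℝ) : (x : S1) = y ↔ ∃ n : ℤ, y = x + n := by
  rw [QuotientAddGroup.eq]
  constructor
  · intro h
    obtain ⟨n, hn⟩ := AddSubgroup.mem_zmultiples_iff.mp h
    rw [zsmul_eq_mul, mul_one] at hn
    exact ⟨n, by linarith⟩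
  · rintro ⟨n, rfl⟩
    exact AddSubgroup.mem_zmultiples_iff.mpr ⟨n, by rw [zsmul_eq_mul, mul_one]; ring⟩

lemma rep_coe (t : ℝ) : rep ((t : ℝ) : S1) = Int.fract t := by
  have := AddCircle.coe_equivIco_mk_apply (p := (1:ℝ)) t
  simpa [rep] using this

lemma exists_coe (x : S1) : ∃ t : ℝ, x = (t : S1) := by
  induction x using QuotientAddGroup.induction_on with
  | H t => exact ⟨t, rfl⟩

/-- Descend a degree-one map of `ℝ` to the circle. -/
def kfun (K : ℝ → ℝ) (hK : ∀ x (n : ℤ), K (x + n) = K x + n) : S1 → S1 :=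
  fun q => Quotient.liftOn' q (fun x => ((K x : ℝ) : S1)) (by
    intro x y hxy
    have h := QuotientAddGroup.leftRel_apply.mp hxy
    obtain ⟨n, hn⟩ := AddSubgroup.mem_zmultiples_iff.mp h
    rw [zsmul_eq_mul, mul_one] at hn
    have hyx : y = x + n := by linarith
    show ((K x : ℝ) : S1) = ((K y : ℝ) : S1)
    rw [coe_eq_iff]
    exact ⟨n, by rw [hyx, hK]⟩)

lemma kfun_coe (K : ℝ → ℝ) (hK : ∀ x (n : ℤ), K (x + n) = K x + n) (x : ℝ) :
    kfun K hK (x : S1) = ((K x : ℝ) : S1) := rfl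

lemma kfun_continuous (K : ℝ → ℝ) (hK : ∀ x (n : ℤ), K (x + n) = K x + n)
    (h : Continuous K) : Continuous (kfun K hK) := by
  unfold kfun
  exact Continuous.quotient_liftOn' ((AddCircle.continuous_mk' 1).comp h) _

end Stmt10Aux

/-- If `f` and `g` are orientation preserving circle homeomorphisms with fixed points
having equal signatures, then they are conjugate by an orientation preserving
homeomorphism fixing every fixed point of `f`. -/
theorem stmt10 (f g : S1 ≃ₜ S1) (hf : OrientationPreserving f)
    (hg : OrientationPreserving g)
    (F G : CircleDeg1Lift) (hF : IsLiftOf f F) (hFfix : ∃ x : ℝ, F x = x)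
    (hG : IsLiftOf g G) (hGfix : ∃ x : ℝ, G x = x)
    (hsig : ∀ x : S1, signature F x = signature G x) :
    ∃ k : S1 ≃ₜ S1, OrientationPreserving k ∧ (∀ x, f x = x → k x = x) ∧
      ∀ x, k (f (k.symm x)) = g x := by
  classical
  open Stmt10Aux in
  -- F is strictly monotone and surjective
  have haux : ∀ (h : S1 ≃ₜ S1) (H : CircleDeg1Lift), IsLiftOf h H →
      Function.Injective (H : ℝ → ℝ) ∧ Function.Surjective (H : ℝ → ℝ) := by
    intro h H hH
    constructor
    · have key2 : ∀ u v : ℝ, u < v → H u = H v → False := by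
        intro u v huv heq
        have h1 : v - u < 1 := by
          by_contra hge
          push_neg at hge
          have h2 : H (u + 1) ≤ H v := H.monotone (by linarith)
          rw [H.map_add_one] at h2
          linarith
        have hne : (u : S1) ≠ (v : S1) := by
          rw [Ne, coe_eq_iff]
          rintro ⟨n, hn⟩
          have h0 : (0:ℝ) < (n:ℝ) := by linarith
          have h1' : (n:ℝ) < 1 := by linarith
          have h2 : (0:ℤ) < n := by exact_mod_cast h0
          have h3 : (1:ℝ) ≤ (n:ℝ) := by exact_mod_cast h2
          linarith
        apply hne
        apply h.injective
        rw [hH u, hH v, heq]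
      intro u v huv
      rcases lt_trichotomy u v with hlt | he | hlt
      · exact absurd (key2 u v hlt huv) not_false
      · exact he
      · exact absurd (key2 v u hlt huv.symm) not_false
    · intro t
      obtain ⟨p, hp⟩ := h.surjective ((t : ℝ) : S1)
      obtain ⟨s, rfl⟩ := exists_coe p
      rw [hH s, coe_eq_iff] at hp
      obtain ⟨n, hn⟩ := hp
      exact ⟨s + n, by rw [H.map_add_int]; linarith⟩
  obtain ⟨hFinj, hFsurj⟩ := haux f F hF
  obtain ⟨hGinj, hGsurj⟩ := haux g G hG
  set E : ℝ ≃o ℝ := StrictMono.orderIsoOfSurjective (F : ℝ → ℝ)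
    (F.monotone.strictMono_of_injective hFinj) hFsurj with hEdef
  set E' : ℝ ≃o ℝ := StrictMono.orderIsoOfSurjective (G : ℝ → ℝ)
    (G.monotone.strictMono_of_injective hGinj) hGsurj with hE'def
  have hEF : ∀ x, E x = F x := fun _ => rfl
  have hE'G : ∀ x, E' x = G x := fun _ => rfl
  -- signatures agree pointwise on ℝ
  have hsgn : ∀ t : ℝ, Real.sign (E t - t) = Real.sign (E' t - t) := by
    intro t
    have h1 := hsig ((t : ℝ) : S1)
    unfold signature at h1
    rw [rep_coe] at h1
    have hfr : Int.fract t = t + ((-⌊t⌋ : ℤ) : ℝ) := by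
      rw [Int.fract]; push_cast; ring
    rw [hfr, F.map_add_int, G.map_add_int] at h1
    have e1 : F t + ((-⌊t⌋ : ℤ) : ℝ) - (t + ((-⌊t⌋ : ℤ) : ℝ)) = F t - t := by ring
    have e2 : G t + ((-⌊t⌋ : ℤ) : ℝ) - (t + ((-⌊t⌋ : ℤ) : ℝ)) = G t - t := by ring
    rw [e1, e2] at h1
    rw [hEF, hE'G]
    exact h1
  have hEper : ∀ x, E (x + 1) = E x + 1 := fun x => by
    rw [hEF, hEF, F.map_add_one]
  have hE'per : ∀ x, E' (x + 1) = E' x + 1 := fun x => by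
    rw [hE'G, hE'G, G.map_add_one]
  have hEfix : ∃ x, E x = x := by
    obtain ⟨x, hx⟩ := hFfix
    exact ⟨x, by rw [hEF]; exact hx⟩
  obtain ⟨K, hKper, hKZ, hKconj⟩ := key E E' hEper hE'per hEfix hsgn
  -- descend K to the circle
  have hKint : ∀ (x : ℝ) (n : ℤ), K (x + n) = K x + n := per_int K hKper
  have hKsymmint : ∀ (x : ℝ) (n : ℤ), K.symm (x + n) = K.symm x + n := by
    intro x n
    apply K.injective
    rw [K.apply_symm_apply, hKint, K.apply_symm_apply]
  set kf : S1 → S1 := kfun (K : ℝ → ℝ) hKint with hkfdef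
  set kg : S1 → S1 := kfun (K.symm : ℝ → ℝ) hKsymmint with hkgdef
  have hkfg : ∀ q, kg (kf q) = q := by
    intro q
    obtain ⟨t, rfl⟩ := exists_coe q
    show ((K.symm (K t) : ℝ) : S1) = ((t : ℝ) : S1)
    rw [K.symm_apply_apply]
  have hkgf : ∀ q, kf (kg q) = q := by
    intro q
    obtain ⟨t, rfl⟩ := exists_coe q
    show ((K (K.symm t) : ℝ) : S1) = ((t : ℝ) : S1)
    rw [K.apply_symm_apply]
  set k : S1 ≃ₜ S1 :=
    { toFun := kf
      invFun := kg
      left_inv := hkfg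
      right_inv := hkgf
      continuous_toFun := kfun_continuous _ hKint K.toHomeomorph.continuous
      continuous_invFun := kfun_continuous _ hKsymmint K.symm.toHomeomorph.continuous }
    with hkdef
  refine ⟨k, ?_, ?_, ?_⟩
  · -- orientation preserving
    refine ⟨⟨⟨(K : ℝ → ℝ), K.monotone⟩, hKper⟩, fun x => rfl⟩
  · -- fixes the fixed points of f
    intro x hx
    obtain ⟨t, rfl⟩ := exists_coe x
    rw [hF t, coe_eq_iff] at hx
    obtain ⟨n, hn⟩ := hx
    obtain ⟨x₁, hx₁⟩ := hFfix
    set m : ℤ := ⌊t - x₁⌋ with hm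
    have h1 : x₁ + (m:ℝ) ≤ t := by
      have := Int.floor_le (t - x₁); rw [← hm] at this; linarith
    have h2 : t < x₁ + (m:ℝ) + 1 := by
      have := Int.lt_floor_add_one (t - x₁); rw [← hm] at this; linarith
    have h3 : F (x₁ + (m:ℝ)) = x₁ + (m:ℝ) := by
      rw [show x₁ + (m:ℝ) = x₁ + ((m:ℤ):ℝ) by push_cast; ring, F.map_add_int, hx₁]
    have h4 : x₁ + (m:ℝ) ≤ F t := by
      have := F.monotone h1; rwa [h3] at this
    have h5 : F t ≤ x₁ + (m:ℝ) + 1 := by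
      have h6 : F t ≤ F (x₁ + (m:ℝ) + 1) := F.monotone h2.le
      rwa [show x₁ + (m:ℝ) + 1 = (x₁ + (m:ℝ)) + 1 by ring, F.map_add_one, h3] at h6
    have hFt : F t = t := by
      have hn' : F t - t = -(n:ℝ) := by linarith
      have hz : n = 0 ∨ n = -1 := by
        have h6 : (-1:ℝ) < -(n:ℝ) := by linarith
        have h7 : (-(n:ℝ)) ≤ 1 := by linarith
        have h8 : (-1:ℤ) < -n := by exact_mod_cast h6
        have h9 : -n ≤ (1:ℤ) := by exact_mod_cast h7
        omega
      rcases hz with h | h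
      · rw [h] at hn'; push_cast at hn'; linarith
      · exfalso
        rw [h] at hn'
        push_cast at hn'
        have hFt1 : F t = t + 1 := by linarith
        have ht : t = x₁ + (m:ℝ) := by linarith
        rw [ht] at hFt1
        rw [h3] at hFt1
        linarith
    have hKt : K t = t := hKZ t (by rw [hEF]; exact hFt)
    show ((K t : ℝ) : S1) = ((t : ℝ) : S1)
    rw [hKt]
  · -- conjugacy
    intro x
    obtain ⟨t, rfl⟩ := exists_coe x
    have h1 : k.symm ((t : ℝ) : S1) = ((K.symm t : ℝ) : S1) := rfl
    rw [h1, hF (K.symm t)]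
    have h2 : k ((F (K.symm t) : ℝ) : S1) = ((K (F (K.symm t)) : ℝ) : S1) := rfl
    rw [h2, hG t]
    have h3 : K (F (K.symm t)) = G t := by
      have h4 := hKconj (K.symm t)
      rw [hEF, hE'G, K.apply_symm_apply] at h4
      exact h4
    rw [h3]
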